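/- arXiv:2010.04385 — 2 statements merged into one kernel-verified Lean document; each statement's English description precedes it below -/
import Mathlib

section
/- Let T ∈ {0,1,…,k}, with potential treatments T_z for instrument values z, and D^t_z = 1{T_z = t}. Fix i ∈ {1,…,k} and assume D^j_i ≤ D^j_0 almost surely for all j ≠ i (treatment states indexed by j, instrument values i and 0). Then for any random variable U and τ ∈ (0,1): P(U ≤ τ, D^i_0 = 0, D^i_i = 1) = Σ_{j ≠ i} P(U ≤ τ, D^j_i = 0, D^j_0 = 1). -/
/-!
Off a null set, `Ti ω` is either `i` or `T0 ω`: the instrument moves an agent only into state `i`.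
So among the agents with `T0 = j ≠ i`, leaving `j` is the same as arriving at `i`, and the
compliers into `i` are split, up to null sets, by the state `T0` they left.
-/

open MeasureTheory Set

theorem measure_inter_preimage_finset_eq_sum {Ω α : Type*} [MeasurableSpace Ω]
    [MeasurableSpace α] [MeasurableSingletonClass α] (μ : Measure Ω) {f : Ω → α}
    (hf : Measurable f) (s : Set Ω) (t : Finset α) :
    μ (s ∩ f ⁻¹' t) = ∑ j ∈ t, μ (s ∩ f ⁻¹' {j}) := by
  classical
  induction t using Finset.induction_on with
  | empty => simp
  | insert a t ha ih =>
    rw [Finset.sum_insert ha, ← ih, ← measure_inter_add_sdiff _ (hf (measurableSet_singleton a))]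
    congr 2
    · ext ω; simp +contextual
    · ext ω
      simp only [Finset.coe_insert, mem_sdiff, mem_inter_iff, mem_preimage, mem_insert_iff,
        SetLike.mem_coe, mem_singleton_iff]
      grind

theorem ae_eq_or_eq_of_measure_switch_eq_zero {Ω ι : Type*} [MeasurableSpace Ω] [Countable ι]
    (μ : Measure Ω) {T0 Ti : Ω → ι} {i : ι}
    (hmono : ∀ j, j ≠ i → μ {ω | Ti ω = j ∧ T0 ω ≠ j} = 0) :
    ∀ᵐ ω ∂μ, Ti ω = i ∨ Ti ω = T0 ω := by
  have hstay : ∀ᵐ ω ∂μ, ∀ j, j ≠ i → Ti ω = j → T0 ω = j := by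
    refine ae_all_iff.2 fun j => ?_
    by_cases hj : j = i
    · exact .of_forall fun _ h => absurd hj h
    · filter_upwards [measure_eq_zero_iff_ae_notMem.1 (hmono j hj)] with ω hω _ h
      by_contra h'
      exact hω ⟨h, h'⟩
  filter_upwards [hstay] with ω hω
  by_cases h : Ti ω = i
  · exact .inl h
  · exact .inr (hω _ h rfl).symm

theorem stmt6_general {Ω : Type*} [MeasurableSpace Ω] (μ : Measure Ω)
    (k : ℕ) (T0 Ti : Ω → Fin (k + 1)) (hT0 : Measurable T0)
    (i : Fin (k + 1))
    (hmono : ∀ j : Fin (k + 1), j ≠ i → μ {ω | Ti ω = j ∧ T0 ω ≠ j} = 0)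
    (U : Ω → ℝ) (τ : ℝ) :
    μ {ω | U ω ≤ τ ∧ T0 ω ≠ i ∧ Ti ω = i}
      = ∑ j ∈ Finset.univ.erase i, μ {ω | U ω ≤ τ ∧ Ti ω ≠ j ∧ T0 ω = j} := by
  have hcompliers : {ω | U ω ≤ τ ∧ T0 ω ≠ i ∧ Ti ω = i}
      = {ω | U ω ≤ τ ∧ Ti ω = i} ∩ T0 ⁻¹' ↑(Finset.univ.erase i) := by
    ext ω
    simp only [mem_ofPred_eq, mem_inter_iff, mem_preimage, Finset.coe_erase, Finset.coe_univ,
      mem_sdiff, mem_univ, mem_singleton_iff, true_and]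
    tauto
  rw [hcompliers, measure_inter_preimage_finset_eq_sum μ hT0]
  refine Finset.sum_congr rfl fun j hj => measure_congr <| Filter.eventuallyEq_set.2 ?_
  filter_upwards [ae_eq_or_eq_of_measure_switch_eq_zero μ hmono] with ω hω
  have hji := Finset.ne_of_mem_erase hj
  simp only [mem_ofPred_eq, mem_inter_iff, mem_preimage, mem_singleton_iff]
  grind

/-- decomposition of the compliers into state `i` as a disjoint union over
the states they left, under the monotonicity inequalities `D^j_i ≤ D^j_0` for `j ≠ i`. -/
theorem stmt6 {Ω : Type*} [MeasurableSpace Ω] (μ : Measure Ω) [IsProbabilityMeasure μ]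
    (k : ℕ) (T0 Ti : Ω → Fin (k + 1)) (hT0 : Measurable T0) (hTi : Measurable Ti)
    (i : Fin (k + 1))
    (hmono : ∀ j : Fin (k + 1), j ≠ i → μ {ω | Ti ω = j ∧ T0 ω ≠ j} = 0)
    (U : Ω → ℝ) (hU : Measurable U) (τ : ℝ) (hτ : τ ∈ Set.Ioo (0:ℝ) 1) :
    μ {ω | U ω ≤ τ ∧ T0 ω ≠ i ∧ Ti ω = i}
      = ∑ j ∈ Finset.univ.erase i, μ {ω | U ω ≤ τ ∧ Ti ω ≠ j ∧ T0 ω = j} :=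
  stmt6_general μ k T0 Ti hT0 i hmono U τ
end

section
/- Let Y_s, Y_t, Y_r be random variables with continuous cdfs, all supported on a set 𝒴 whose closure equals the closure of its interior 𝒴°, and such that F_{Y_t}(𝒴°) is the same set for all three variables. Define φ_{s,t}(y) := Q_{Y_t}(F_{Y_s}(y)). Then: (a) φ_{s,t} is strictly increasing on 𝒴°; (b) φ_{s,r} = φ_{t,r} ∘ φ_{s,t} on 𝒴°; (c) φ_{t,s} is the inverse of φ_{s,t} on 𝒴°, i.e., φ_{t,s}(φ_{s,t}(y)) = y for y ∈ 𝒴°. -/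
/-!
On the interior `U` of the common support every cdf is strictly increasing, so its generalized
inverse undoes it there: `Q_t (F_t z) = z` for `z ∈ U`. Since `F_s(U) = F_t(U)`, each `y ∈ U`
has a partner `z ∈ U` with `F_t z = F_s y`, and then `φ_{s,t} y = z`. All three claims follow
from this identity together with the strict monotonicity of `F_s` and the monotonicity of `F_t`.
-/

open MeasureTheory Set

section SupportInterior

variable {ν : Measure ℝ} {U : Set ℝ}

lemma measure_pos_of_isOpen_of_inter_nonempty (hU : IsOpen U)
    (hν : ∀ y ∈ U, ∀ ε > 0, 0 < ν (Ioo (y - ε) (y + ε)))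
    {V : Set ℝ} (hV : IsOpen V) (hVU : (V ∩ U).Nonempty) : 0 < ν V := by
  obtain ⟨d, hd⟩ := hVU
  obtain ⟨ε, hε, hball⟩ := Metric.isOpen_iff.1 (hV.inter hU) d hd
  rw [Real.ball_eq_Ioo] at hball
  exact (hν d hd.2 ε hε).trans_le (measure_mono (hball.trans inter_subset_left))

lemma measureReal_Iic_lt_of_measure_Ioc_pos [IsFiniteMeasure ν] {a b : ℝ} (hab : a ≤ b)
    (hpos : 0 < ν (Ioc a b)) : ν.real (Iic a) < ν.real (Iic b) := by
  rw [← Iic_union_Ioc_eq_Iic hab, measureReal_union (Iic_disjoint_Ioc le_rfl) measurableSet_Ioc]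
  exact lt_add_of_pos_right _ (ENNReal.toReal_pos hpos.ne' (measure_ne_top ν _))

/-- The point `c ∈ U` may be an endpoint of `[a, b]`: openness of `U` still provides mass
strictly between `a` and `b`. -/
lemma measureReal_Iic_lt_of_mem_Icc [IsFiniteMeasure ν] (hU : IsOpen U)
    (hν : ∀ y ∈ U, ∀ ε > 0, 0 < ν (Ioo (y - ε) (y + ε)))
    {a b c : ℝ} (hab : a < b) (hc : c ∈ U) (hcab : c ∈ Icc a b) :
    ν.real (Iic a) < ν.real (Iic b) := by
  rw [← closure_Ioo hab.ne] at hcab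
  have hmeet : (Ioo a b ∩ U).Nonempty :=
    (mem_closure_iff.1 hcab U hU hc).mono fun _ h => ⟨h.2, h.1⟩
  exact measureReal_Iic_lt_of_measure_Ioc_pos hab.le
    ((measure_pos_of_isOpen_of_inter_nonempty hU hν isOpen_Ioo hmeet).trans_le
      (measure_mono Ioo_subset_Ioc_self))

lemma sInf_measureReal_Iic_ge [IsFiniteMeasure ν] (hU : IsOpen U)
    (hν : ∀ y ∈ U, ∀ ε > 0, 0 < ν (Ioo (y - ε) (y + ε))) {y : ℝ} (hy : y ∈ U) :
    sInf {w | ν.real (Iic w) ≥ ν.real (Iic y)} = y := by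
  refine IsLeast.csInf_eq ⟨mem_ofPred.2 le_rfl, fun w hw => ?_⟩
  by_contra! hwy
  exact (measureReal_Iic_lt_of_mem_Icc hU hν hwy hy ⟨hwy.le, le_rfl⟩).not_ge hw

end SupportInterior

theorem stmt8_general (νs νt : Measure ℝ)
    [IsProbabilityMeasure νs] [IsProbabilityMeasure νt]
    (Fs Ft Qs Qt Qr : ℝ → ℝ)
    (hFs : ∀ y, Fs y = (νs (Set.Iic y)).toReal)
    (hFt : ∀ y, Ft y = (νt (Set.Iic y)).toReal)
    (𝒴 : Set ℝ)
    (hs2 : ∀ y ∈ interior 𝒴, ∀ ε > 0, 0 < νs (Set.Ioo (y - ε) (y + ε)))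
    (ht2 : ∀ y ∈ interior 𝒴, ∀ ε > 0, 0 < νt (Set.Ioo (y - ε) (y + ε)))
    -- F_{Y}(𝒴°) is the same set for all three variables :
    (himg1 : Fs '' interior 𝒴 = Ft '' interior 𝒴)
    (hQs : ∀ τ, Qs τ = sInf {w | Fs w ≥ τ})
    (hQt : ∀ τ, Qt τ = sInf {w | Ft w ≥ τ})
    (φst φtr φsr φts : ℝ → ℝ)
    (hφst : ∀ y, φst y = Qt (Fs y)) (hφtr : ∀ y, φtr y = Qr (Ft y))
    (hφsr : ∀ y, φsr y = Qr (Fs y)) (hφts : ∀ y, φts y = Qs (Ft y)) :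
    StrictMonoOn φst (interior 𝒴)
    ∧ (∀ y ∈ interior 𝒴, φsr y = φtr (φst y))
    ∧ (∀ y ∈ interior 𝒴, φts (φst y) = y) := by
  obtain rfl : Fs = fun y => νs.real (Iic y) := funext hFs
  obtain rfl : Ft = fun y => νt.real (Iic y) := funext hFt
  beta_reduce at *
  have partner : ∀ y ∈ interior 𝒴,
      νt.real (Iic (φst y)) = νs.real (Iic y) ∧ φst y ∈ interior 𝒴 := by
    intro y hy
    obtain ⟨z, hz, hzy⟩ := himg1 ▸ mem_image_of_mem (fun y => νs.real (Iic y)) hy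
    rw [hφst, hQt, ← hzy, sInf_measureReal_Iic_ge isOpen_interior ht2 hz]
    exact ⟨rfl, hz⟩
  refine ⟨fun y₁ hy₁ y₂ hy₂ hy => ?_, fun y hy => ?_, fun y hy => ?_⟩
  · have hlt := measureReal_Iic_lt_of_mem_Icc isOpen_interior hs2 hy hy₁ ⟨le_rfl, hy.le⟩
    rw [← (partner y₁ hy₁).1, ← (partner y₂ hy₂).1] at hlt
    have hmono : Monotone fun y => νt.real (Iic y) := fun _ _ h =>
      measureReal_mono (Iic_subset_Iic.2 h)
    exact hmono.reflect_lt hlt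
  · rw [hφsr, hφtr, (partner y hy).1]
  · rw [hφts, (partner y hy).1, hQs, sInf_measureReal_Iic_ge isOpen_interior hs2 hy]

/-- properties of the counterfactual mappings: strict monotonicity,
composition rule, and inversion on the interior of the common support. -/
theorem stmt8 (νs νt νr : Measure ℝ)
    [IsProbabilityMeasure νs] [IsProbabilityMeasure νt] [IsProbabilityMeasure νr]
    (Fs Ft Fr Qs Qt Qr : ℝ → ℝ)
    (hFs : ∀ y, Fs y = (νs (Set.Iic y)).toReal)
    (hFt : ∀ y, Ft y = (νt (Set.Iic y)).toReal)
    (hFr : ∀ y, Fr y = (νr (Set.Iic y)).toReal)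
    (hFsc : Continuous Fs) (hFtc : Continuous Ft) (hFrc : Continuous Fr)
    (𝒴 : Set ℝ) (hcl : closure (interior 𝒴) = closure 𝒴)
    -- supported on 𝒴 :
    (hs1 : νs (closure 𝒴) = 1) (ht1 : νt (closure 𝒴) = 1) (hr1 : νr (closure 𝒴) = 1)
    (hs2 : ∀ y ∈ interior 𝒴, ∀ ε > 0, 0 < νs (Set.Ioo (y - ε) (y + ε)))
    (ht2 : ∀ y ∈ interior 𝒴, ∀ ε > 0, 0 < νt (Set.Ioo (y - ε) (y + ε)))
    (hr2 : ∀ y ∈ interior 𝒴, ∀ ε > 0, 0 < νr (Set.Ioo (y - ε) (y + ε)))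
    -- F_{Y}(𝒴°) is the same set for all three variables :
    (himg1 : Fs '' interior 𝒴 = Ft '' interior 𝒴)
    (himg2 : Ft '' interior 𝒴 = Fr '' interior 𝒴)
    (hQs : ∀ τ, Qs τ = sInf {w | Fs w ≥ τ})
    (hQt : ∀ τ, Qt τ = sInf {w | Ft w ≥ τ})
    (hQr : ∀ τ, Qr τ = sInf {w | Fr w ≥ τ})
    (φst φtr φsr φts : ℝ → ℝ)
    (hφst : ∀ y, φst y = Qt (Fs y)) (hφtr : ∀ y, φtr y = Qr (Ft y))
    (hφsr : ∀ y, φsr y = Qr (Fs y)) (hφts : ∀ y, φts y = Qs (Ft y)) :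
    StrictMonoOn φst (interior 𝒴)
    ∧ (∀ y ∈ interior 𝒴, φsr y = φtr (φst y))
    ∧ (∀ y ∈ interior 𝒴, φts (φst y) = y) :=
  stmt8_general νs νt Fs Ft Qs Qt Qr hFs hFt 𝒴 hs2 ht2 himg1 hQs hQt φst φtr φsr φts hφst hφtr hφsr
    hφts
end
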